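/- Let H be a complex Hilbert space, B : H → H a compact operator, r > 0 and c ≥ 0. Suppose there are sequences of: complex Hilbert spaces H_l, compact operators B_l : H_l → H_l, unitary operators U_l : H → H_l, boundedly invertible operators E_l ∈ 𝓛(H_l), and reals c_l ≥ 0, such that for every l: B = U_l^{-1} E_l B_l E_l^{−1} U_l and lim_{j→∞} s_j(B_l) j^{r} = c_l, and such that ‖E_l‖ · ‖E_l^{−1}‖ → 1 and c_l → c as l → ∞. Then lim_{j→∞} s_j(B) j^{r} = c. -/

import Mathlib

/-! Singular values are stable under two-sided composition: `s_j(G C G') ≤ ‖G‖ ‖G'‖ s_j(C)`.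
Since `B = (U_l⁻¹ E_l) B_l (U_l⁻¹ E_l)⁻¹`, the sequences `s_j(B) j^r` and `s_j(B_l) j^r` bound
each other up to the factor `κ_l = ‖E_l‖ ‖E_l⁻¹‖`. Hence `limsup_j s_j(B) j^r ≤ κ_l c_l` and
`liminf_j s_j(B) j^r ≥ c_l / κ_l` for every `l`, and letting `l → ∞` squeezes both to `c`. -/

open Filter
open scoped Topology

noncomputable section

/-- The `j`-th singular value (approximation number) of a bounded operator between
Hilbert spaces: `s_j(B) = inf{‖B − F‖ : F of rank < j}`. -/
def sNum {H H₁ : Type*} [NormedAddCommGroup H] [InnerProductSpace ℂ H]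
    [NormedAddCommGroup H₁] [InnerProductSpace ℂ H₁] (B : H →L[ℂ] H₁) (j : ℕ) : ℝ :=
  sInf {r : ℝ | ∃ F : H →L[ℂ] H₁,
    Module.rank ℂ (LinearMap.range (F : H →ₗ[ℂ] H₁)) < (j : Cardinal) ∧ ‖B - F‖ = r}

section sNum

variable {H₀ H₁ H₂ H₃ : Type*}
  [NormedAddCommGroup H₀] [InnerProductSpace ℂ H₀] [NormedAddCommGroup H₁] [InnerProductSpace ℂ H₁]
  [NormedAddCommGroup H₂] [InnerProductSpace ℂ H₂] [NormedAddCommGroup H₃] [InnerProductSpace ℂ H₃]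

lemma sNum_nonneg (B : H₀ →L[ℂ] H₁) (j : ℕ) : 0 ≤ sNum B j :=
  Real.sInf_nonneg <| by rintro _ ⟨F, -, rfl⟩; exact norm_nonneg _

lemma sNum_zero (B : H₀ →L[ℂ] H₁) : sNum B 0 = 0 := by
  simp [sNum]

lemma sNum_le_mul_of_forall_exists {B : H₀ →L[ℂ] H₁} {C : H₂ →L[ℂ] H₃} {k : ℝ} (hk : 0 ≤ k)
    {j : ℕ} (h : ∀ F : H₂ →L[ℂ] H₃, (F : H₂ →ₗ[ℂ] H₃).rank < j →
      ∃ F' : H₀ →L[ℂ] H₁, (F' : H₀ →ₗ[ℂ] H₁).rank < j ∧ ‖B - F'‖ ≤ k * ‖C - F‖) :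
    sNum B j ≤ k * sNum C j := by
  rcases Nat.eq_zero_or_pos j with rfl | hj
  · simp [sNum_zero]
  have hne : {s : ℝ | ∃ F : H₂ →L[ℂ] H₃,
      Module.rank ℂ (LinearMap.range (F : H₂ →ₗ[ℂ] H₃)) < (j : Cardinal) ∧ ‖C - F‖ = s}.Nonempty :=
    ⟨_, 0, by simpa using hj, rfl⟩
  rw [sNum, sNum, ← smul_eq_mul, ← Real.sInf_smul_of_nonneg hk]
  refine le_csInf (hne.image _) ?_
  rintro _ ⟨_, ⟨F, hF, rfl⟩, rfl⟩
  obtain ⟨F', hF', hle⟩ := h F hF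
  refine le_trans (csInf_le ⟨0, ?_⟩ ⟨F', hF', rfl⟩) hle
  rintro _ ⟨_, -, rfl⟩
  exact norm_nonneg _

lemma sNum_comp_le (G : H₂ →L[ℂ] H₃) (C : H₁ →L[ℂ] H₂) (G' : H₀ →L[ℂ] H₁) (j : ℕ) :
    sNum (G ∘L C ∘L G') j ≤ ‖G‖ * ‖G'‖ * sNum C j := by
  refine sNum_le_mul_of_forall_exists (by positivity) fun F hF => ⟨G ∘L F ∘L G', ?_, ?_⟩
  · have hrank := (LinearMap.lift_rank_comp_le_right ((F : H₁ →ₗ[ℂ] H₂) ∘ₗ (G' : H₀ →ₗ[ℂ] H₁))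
      (G : H₂ →ₗ[ℂ] H₃)).trans_lt
      (Cardinal.lift_lt.2 ((LinearMap.rank_comp_le_left _ _).trans_lt hF))
    simpa using hrank
  · calc ‖G ∘L C ∘L G' - G ∘L F ∘L G'‖ = ‖G ∘L (C - F) ∘L G'‖ := by
          simp only [ContinuousLinearMap.sub_comp, ContinuousLinearMap.comp_sub]
      _ ≤ ‖G‖ * (‖C - F‖ * ‖G'‖) :=
          (G.opNorm_comp_le _).trans (by gcongr; exact (C - F).opNorm_comp_le G')
      _ = ‖G‖ * ‖G'‖ * ‖C - F‖ := by ring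

end sNum

theorem tendsto_of_le_mul_of_le_mul {ι κ : Type*} {F : Filter ι} [F.NeBot] {L : Filter κ} [L.NeBot]
    {f : ι → ℝ} {g : κ → ι → ℝ} {K a : κ → ℝ} {c : ℝ} (hf : ∀ j, 0 ≤ f j)
    (hfg : ∀ l j, f j ≤ K l * g l j) (hgf : ∀ l j, g l j ≤ K l * f j)
    (hg : ∀ l, Tendsto (g l) F (𝓝 (a l))) (hK : Tendsto K L (𝓝 1)) (ha : Tendsto a L (𝓝 c)) :
    Tendsto f F (𝓝 c) := by
  obtain ⟨l₀⟩ : Nonempty κ := L.nonempty_of_neBot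
  have hbdd : IsBoundedUnder (· ≤ ·) F f :=
    ((hg l₀).const_mul (K l₀)).isBoundedUnder_le.mono_le (.of_forall (hfg l₀))
  have hlimsup (l : κ) : limsup f F ≤ K l * a l :=
    (limsup_le_limsup (.of_forall (hfg l)) (isCoboundedUnder_le_of_le F hf)
      ((hg l).const_mul (K l)).isBoundedUnder_le).trans_eq ((hg l).const_mul (K l)).limsup_eq
  have hliminf : ∀ᶠ l in L, a l / K l ≤ liminf f F := by
    filter_upwards [hK.eventually (lt_mem_nhds one_pos)] with l hKl
    refine (((hg l).div_const (K l)).liminf_eq).symm.trans_le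
      (liminf_le_liminf (.of_forall fun j => ?_) ((hg l).div_const (K l)).isBoundedUnder_ge
        hbdd.isCoboundedUnder_ge)
    exact (div_le_iff₀' hKl).2 (hgf l j)
  refine tendsto_of_le_liminf_of_limsup_le ?_ ?_ hbdd (isBoundedUnder_of ⟨0, hf⟩)
  · have := ha.div hK one_ne_zero
    rw [div_one] at this
    exact le_of_tendsto this hliminf
  · have := hK.mul ha
    rw [one_mul] at this
    exact ge_of_tendsto' this hlimsup

theorem statement17_general {H : Type*}
    [NormedAddCommGroup H] [InnerProductSpace ℂ H]
    (B : H →L[ℂ] H)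
    (r c : ℝ)
    (Hl : ℕ → Type*)
    [∀ l, NormedAddCommGroup (Hl l)] [∀ l, InnerProductSpace ℂ (Hl l)]
    (Bl : ∀ l, Hl l →L[ℂ] Hl l)
    (U : ∀ l, H ≃ₗᵢ[ℂ] Hl l)
    (E : ∀ l, Hl l ≃L[ℂ] Hl l)
    (cl : ℕ → ℝ)
    (hconj : ∀ l, ∀ x : H,
      B x = (U l).symm ((E l) ((Bl l) ((E l).symm ((U l) x)))))
    (hasym : ∀ l, Tendsto (fun j : ℕ => sNum (Bl l) j * (j : ℝ) ^ r) atTop (𝓝 (cl l)))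
    (hnorm : Tendsto (fun l : ℕ =>
      ‖((E l : Hl l →L[ℂ] Hl l))‖ * ‖(((E l).symm : Hl l →L[ℂ] Hl l))‖) atTop (𝓝 1))
    (hcl : Tendsto cl atTop (𝓝 c)) :
    Tendsto (fun j : ℕ => sNum B j * (j : ℝ) ^ r) atTop (𝓝 c) := by
  set K : ℕ → ℝ := fun l =>
    ‖((E l : Hl l →L[ℂ] Hl l))‖ * ‖(((E l).symm : Hl l →L[ℂ] Hl l))‖
  let G l : Hl l →L[ℂ] H := ((U l).symm : Hl l →L[ℂ] H) ∘L (E l : Hl l →L[ℂ] Hl l)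
  let G' l : H →L[ℂ] Hl l := ((E l).symm : Hl l →L[ℂ] Hl l) ∘L (U l : H →L[ℂ] Hl l)
  have hG l : ‖G l‖ * ‖G' l‖ = K l := by
    simp only [G, G', K, ContinuousLinearMap.opNorm_linearIsometryEquiv_comp,
      ContinuousLinearMap.opNorm_comp_linearIsometryEquiv]
  have hB l : B = G l ∘L Bl l ∘L G' l := ContinuousLinearMap.ext (hconj l)
  have hBl l : Bl l = G' l ∘L B ∘L G l := by
    ext x
    simp [hB l, G, G']
  have hjr (j : ℕ) : (0 : ℝ) ≤ (j : ℝ) ^ r := by positivity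
  refine tendsto_of_le_mul_of_le_mul (fun j => mul_nonneg (sNum_nonneg B j) (hjr j))
    (fun l j => ?_) (fun l j => ?_) hasym hnorm hcl
  · rw [← mul_assoc, ← hG, hB l]
    exact mul_le_mul_of_nonneg_right (sNum_comp_le _ _ _ j) (hjr j)
  · rw [← mul_assoc, ← hG, mul_comm ‖G l‖, hBl l]
    exact mul_le_mul_of_nonneg_right (sNum_comp_le _ _ _ j) (hjr j)

/-- if `B` is conjugate, via unitaries `U_l` and boundedly invertible
operators `E_l` with `‖E_l‖‖E_l⁻¹‖ → 1`, to compact operators `B_l` with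
`s_j(B_l) j^r → c_l` and `c_l → c`, then `s_j(B) j^r → c`. -/
theorem statement17 {H : Type*}
    [NormedAddCommGroup H] [InnerProductSpace ℂ H] [CompleteSpace H]
    (B : H →L[ℂ] H) (hB : IsCompactOperator (B : H → H))
    (r c : ℝ) (hr : 0 < r) (hc : 0 ≤ c)
    (Hl : ℕ → Type*)
    [∀ l, NormedAddCommGroup (Hl l)] [∀ l, InnerProductSpace ℂ (Hl l)]
    [∀ l, CompleteSpace (Hl l)]
    (Bl : ∀ l, Hl l →L[ℂ] Hl l)
    (hBl : ∀ l, IsCompactOperator ((Bl l : Hl l →L[ℂ] Hl l) : Hl l → Hl l))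
    (U : ∀ l, H ≃ₗᵢ[ℂ] Hl l)
    (E : ∀ l, Hl l ≃L[ℂ] Hl l)
    (cl : ℕ → ℝ)
    (hconj : ∀ l, ∀ x : H,
      B x = (U l).symm ((E l) ((Bl l) ((E l).symm ((U l) x)))))
    (hasym : ∀ l, Tendsto (fun j : ℕ => sNum (Bl l) j * (j : ℝ) ^ r) atTop (𝓝 (cl l)))
    (hnorm : Tendsto (fun l : ℕ =>
      ‖((E l : Hl l →L[ℂ] Hl l))‖ * ‖(((E l).symm : Hl l →L[ℂ] Hl l))‖) atTop (𝓝 1))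
    (hcl : Tendsto cl atTop (𝓝 c)) :
    Tendsto (fun j : ℕ => sNum B j * (j : ℝ) ^ r) atTop (𝓝 c) :=
  statement17_general B r c Hl Bl U E cl hconj hasym hnorm hcl
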